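/- arXiv:1104.1845 — 2 statements merged into one kernel-verified Lean document; each statement's English description precedes it below -/
import Mathlib

section
/- Let 0 < δ < 1, let q, Q be continuous functions on the annulus 𝒜_δ = {1−δ ≤ |z| ≤ 1} with |q| ≤ q₀ and |Q| ≤ Q₀, and let w be a C¹ solution of w_z̄ = q·w_z + Q on 𝒜_δ with ε ≤ |w| for some ε > 0 and |w(z)| = 1 whenever |z| = 1. Let σ(z) = 1/conj(z) denote reflection in the unit circle and 𝒜*_δ = σ(𝒜_δ) = {1 ≤ |z| ≤ 1/(1−δ)}. Define on 𝒜*_δ: w̃(z) = 1/conj(w(σ(z))), q̃(z) = conj(q(σ(z)))·z²·σ(z)², and Q̃(z) = conj(Q(σ(z)))·σ(z)²·w̃(z)². Then w̃ is C¹ in the interior of 𝒜*_δ and satisfies w̃_z̄ = q̃·w̃_z + Q̃ there; moreover |q̃| ≤ q₀ and |Q̃| ≤ Q₀/ε² on 𝒜*_δ, and w̃ agrees with w on the unit circle, so that w and w̃ together define a continuous function on 𝒜_δ ∪ 𝒜*_δ. -/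
/-!
Write `∂L, ∂̄L` for the coefficients in `L v = ∂L · v + ∂̄L · conj v` of an `ℝ`-linear map
`L : ℂ → ℂ`. They obey the chain rule `∂(A ∘ B) = ∂A ∂B + ∂̄A conj(∂̄B)`,
`∂̄(A ∘ B) = ∂A ∂̄B + ∂̄A conj(∂B)`, and `w̃ = inv ∘ conj ∘ w ∘ inv ∘ conj` with `inv`
holomorphic. This gives `w̃_z = conj(w_z(σz)) z⁻² w̃²` and `w̃_z̄ = conj(w_z̄(σz)) σ(z)² w̃²`, so
conjugating the equation at `σ(z)` (an interior point of `𝒜_δ`) and multiplying by `σ(z)² w̃²`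
yields the reflected one. The bounds follow from `|z σ(z)| = 1`, `|σ(z)| ≤ 1` and
`|w̃| ≤ 1/ε`; on the unit circle `σ` and `conj ∘ inv` are the identity, so `w̃ = w` there.
-/

open Complex Metric

noncomputable section

/-- The closed annulus `𝒜_δ = {z ∈ ℂ : 1 − δ ≤ |z| ≤ 1}`. -/
def annulus (δ : ℝ) : Set ℂ :=
  {z : ℂ | 1 - δ ≤ ‖z‖ ∧ ‖z‖ ≤ 1}

/-- The reflected annulus `𝒜*_δ = {z ∈ ℂ : 1 ≤ |z| ≤ 1/(1 − δ)}`. -/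
def annulusStar (δ : ℝ) : Set ℂ :=
  {z : ℂ | 1 ≤ ‖z‖ ∧ ‖z‖ ≤ (1 - δ)⁻¹}

/-- Reflection in the unit circle: `σ(z) = 1/conj(z)`. -/
def circleReflection (z : ℂ) : ℂ := ((starRingEnd ℂ) z)⁻¹

/-- The Wirtinger derivative `w_z̄ = (w_x + i w_y)/2` computed within the set `s`. -/
def dbarOn (w : ℂ → ℂ) (s : Set ℂ) (z : ℂ) : ℂ :=
  (2⁻¹ : ℂ) * (fderivWithin ℝ w s z 1 + Complex.I * fderivWithin ℝ w s z Complex.I)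

/-- The Wirtinger derivative `w_z = (w_x − i w_y)/2` computed within the set `s`. -/
def dzOn (w : ℂ → ℂ) (s : Set ℂ) (z : ℂ) : ℂ :=
  (2⁻¹ : ℂ) * (fderivWithin ℝ w s z 1 - Complex.I * fderivWithin ℝ w s z Complex.I)

/-- The Wirtinger derivative `w_z̄ = (w_x + i w_y)/2` (full derivative). -/
def dbarC (w : ℂ → ℂ) (z : ℂ) : ℂ :=
  (2⁻¹ : ℂ) * (fderiv ℝ w z 1 + Complex.I * fderiv ℝ w z Complex.I)

/-- The Wirtinger derivative `w_z = (w_x − i w_y)/2` (full derivative). -/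
def dzC (w : ℂ → ℂ) (z : ℂ) : ℂ :=
  (2⁻¹ : ℂ) * (fderiv ℝ w z 1 - Complex.I * fderiv ℝ w z Complex.I)

/-- The reflected solution `w̃(z) = 1/conj(w(σ(z)))`. -/
def reflW (w : ℂ → ℂ) (z : ℂ) : ℂ :=
  ((starRingEnd ℂ) (w (circleReflection z)))⁻¹

/-- The reflected coefficient `q̃(z) = conj(q(σ(z)))·z²·σ(z)²`. -/
def reflq (q : ℂ → ℂ) (z : ℂ) : ℂ :=
  (starRingEnd ℂ) (q (circleReflection z)) * z ^ 2 * (circleReflection z) ^ 2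

/-- The reflected coefficient `Q̃(z) = conj(Q(σ(z)))·σ(z)²·w̃(z)²`. -/
def reflQ (Q w : ℂ → ℂ) (z : ℂ) : ℂ :=
  (starRingEnd ℂ) (Q (circleReflection z)) * (circleReflection z) ^ 2 * (reflW w z) ^ 2


open ComplexConjugate Topology

namespace ContinuousLinearMap

def wirtingerZ (L : ℂ →L[ℝ] ℂ) : ℂ := 2⁻¹ * (L 1 - I * L I)

def wirtingerZbar (L : ℂ →L[ℝ] ℂ) : ℂ := 2⁻¹ * (L 1 + I * L I)

theorem apply_eq_wirtinger (L : ℂ →L[ℝ] ℂ) (v : ℂ) :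
    L v = L.wirtingerZ * v + L.wirtingerZbar * conj v := by
  have hv : v = v.re • (1 : ℂ) + v.im • I := by simp [real_smul, re_add_im]
  rw [hv, map_add, map_smul, map_smul]
  simp only [wirtingerZ, wirtingerZbar, real_smul, map_add, map_mul, conj_ofReal, conj_I,
    map_one]
  ring_nf
  simp only [I_sq]
  ring

@[simp]
theorem wirtingerZ_comp (A B : ℂ →L[ℝ] ℂ) :
    (A.comp B).wirtingerZ =
      A.wirtingerZ * B.wirtingerZ + A.wirtingerZbar * conj B.wirtingerZbar := by
  simp only [wirtingerZ, wirtingerZbar, comp_apply, apply_eq_wirtinger A (B _), map_mul, map_add,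
    conj_I, map_inv₀, map_ofNat]
  ring_nf

@[simp]
theorem wirtingerZbar_comp (A B : ℂ →L[ℝ] ℂ) :
    (A.comp B).wirtingerZbar =
      A.wirtingerZ * B.wirtingerZbar + A.wirtingerZbar * conj B.wirtingerZ := by
  simp only [wirtingerZ, wirtingerZbar, comp_apply, apply_eq_wirtinger A (B _), map_mul, map_sub,
    conj_I, map_inv₀, map_ofNat]
  ring_nf

@[simp]
theorem wirtingerZ_restrictScalars (L : ℂ →L[ℂ] ℂ) : (L.restrictScalars ℝ).wirtingerZ = L 1 := by
  have hI : L I = I * L 1 := by simpa using L.map_smul I 1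
  rw [wirtingerZ, coe_restrictScalars', hI]
  linear_combination (-2⁻¹ * L 1) * I_sq

@[simp]
theorem wirtingerZbar_restrictScalars (L : ℂ →L[ℂ] ℂ) :
    (L.restrictScalars ℝ).wirtingerZbar = 0 := by
  have hI : L I = I * L 1 := by simpa using L.map_smul I 1
  rw [wirtingerZbar, coe_restrictScalars', hI]
  linear_combination (2⁻¹ * L 1) * I_sq

@[simp]
theorem wirtingerZ_conj : (conjCLE : ℂ →L[ℝ] ℂ).wirtingerZ = 0 := by
  simp [wirtingerZ]

@[simp]
theorem wirtingerZbar_conj : (conjCLE : ℂ →L[ℝ] ℂ).wirtingerZbar = 1 := by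
  norm_num [wirtingerZbar]

end ContinuousLinearMap

theorem dzC_eq_wirtingerZ (w : ℂ → ℂ) (z : ℂ) : dzC w z = (fderiv ℝ w z).wirtingerZ := rfl

theorem dbarC_eq_wirtingerZbar (w : ℂ → ℂ) (z : ℂ) :
    dbarC w z = (fderiv ℝ w z).wirtingerZbar := rfl

theorem dzOn_of_mem_nhds {w : ℂ → ℂ} {s : Set ℂ} {z : ℂ} (hs : s ∈ 𝓝 z) :
    dzOn w s z = dzC w z := by
  rw [dzOn, dzC, fderivWithin_of_mem_nhds hs]

theorem dbarOn_of_mem_nhds {w : ℂ → ℂ} {s : Set ℂ} {z : ℂ} (hs : s ∈ 𝓝 z) :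
    dbarOn w s z = dbarC w z := by
  rw [dbarOn, dbarC, fderivWithin_of_mem_nhds hs]

section circleReflection

theorem ne_zero_of_mem_annulusStar {δ : ℝ} {z : ℂ} (hz : z ∈ annulusStar δ) : z ≠ 0 :=
  norm_pos_iff.1 (one_pos.trans_le hz.1)

theorem circleReflection_circleReflection (z : ℂ) :
    circleReflection (circleReflection z) = z := by
  simp [circleReflection]

theorem norm_circleReflection (z : ℂ) : ‖circleReflection z‖ = ‖z‖⁻¹ := by
  simp [circleReflection]

theorem circleReflection_ne_zero {z : ℂ} (hz : z ≠ 0) : circleReflection z ≠ 0 := by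
  simpa [circleReflection] using hz

theorem circleReflection_eq_self {z : ℂ} (hz : ‖z‖ = 1) : circleReflection z = z := by
  rw [circleReflection, ← inv_eq_conj hz, inv_inv]

theorem hasFDerivAt_circleReflection {z : ℂ} (hz : z ≠ 0) :
    HasFDerivAt circleReflection
      ((((1 : ℂ →L[ℂ] ℂ).smulRight (-(conj z ^ 2)⁻¹)).restrictScalars ℝ).comp
        (conjCLE : ℂ →L[ℝ] ℂ)) z :=
  ((hasDerivAt_inv (by simpa using hz)).hasFDerivAt.restrictScalars ℝ).comp z
    conjCLE.hasFDerivAt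

theorem contDiffAt_circleReflection {n : WithTop ℕ∞} {z : ℂ} (hz : z ≠ 0) :
    ContDiffAt ℝ n circleReflection z :=
  (contDiffAt_inv ℝ (by simpa using hz)).comp z conjCLE.contDiff.contDiffAt

theorem mapsTo_circleReflection_annulusStar (δ : ℝ) :
    Set.MapsTo circleReflection (annulusStar δ) (annulus δ) := by
  rintro z ⟨h1, h2⟩
  have hδ : 0 < 1 - δ := inv_pos.1 (zero_lt_one.trans_le (h1.trans h2))
  refine ⟨?_, ?_⟩ <;> rw [norm_circleReflection]
  · simpa using inv_anti₀ (by positivity) h2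
  · exact inv_le_one_of_one_le₀ h1

theorem annulus_mem_nhds_circleReflection {δ : ℝ} {z : ℂ}
    (hz : z ∈ interior (annulusStar δ)) :
    annulus δ ∈ 𝓝 (circleReflection z) := by
  have hcont := (contDiffAt_circleReflection (n := 0)
    (circleReflection_ne_zero (ne_zero_of_mem_annulusStar (interior_subset hz)))).continuousAt
  rw [ContinuousAt, circleReflection_circleReflection] at hcont
  refine Filter.mem_of_superset (hcont (mem_interior_iff_mem_nhds.1 hz)) fun x hx => ?_
  simpa [circleReflection_circleReflection] using mapsTo_circleReflection_annulusStar δ hx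

end circleReflection

section reflW

variable {w : ℂ → ℂ} {z : ℂ}

theorem hasFDerivAt_reflW {L : ℂ →L[ℝ] ℂ} (hw : HasFDerivAt w L (circleReflection z))
    (hz : z ≠ 0) (hwz : w (circleReflection z) ≠ 0) :
    HasFDerivAt (reflW w)
      ((((1 : ℂ →L[ℂ] ℂ).smulRight
          (-(conj (w (circleReflection z)) ^ 2)⁻¹)).restrictScalars ℝ).comp
        ((conjCLE : ℂ →L[ℝ] ℂ).comp (L.comp
          ((((1 : ℂ →L[ℂ] ℂ).smulRight (-(conj z ^ 2)⁻¹)).restrictScalars ℝ).comp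
            (conjCLE : ℂ →L[ℝ] ℂ))))) z :=
  ((hasDerivAt_inv (by simpa using hwz)).hasFDerivAt.restrictScalars ℝ).comp z
    (conjCLE.hasFDerivAt.comp z (hw.comp z (hasFDerivAt_circleReflection hz)))

theorem contDiffAt_reflW {n : WithTop ℕ∞} (hw : ContDiffAt ℝ n w (circleReflection z))
    (hz : z ≠ 0) (hwz : w (circleReflection z) ≠ 0) : ContDiffAt ℝ n (reflW w) z :=
  (contDiffAt_inv ℝ (by simpa using hwz)).comp z
    (conjCLE.contDiff.contDiffAt.comp z (hw.comp z (contDiffAt_circleReflection hz)))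

theorem dzC_reflW (hw : DifferentiableAt ℝ w (circleReflection z)) (hz : z ≠ 0)
    (hwz : w (circleReflection z) ≠ 0) :
    dzC (reflW w) z = conj (dzC w (circleReflection z)) * (z ^ 2)⁻¹ * reflW w z ^ 2 := by
  rw [dzC_eq_wirtingerZ, (hasFDerivAt_reflW hw.hasFDerivAt hz hwz).fderiv, dzC_eq_wirtingerZ]
  simp [reflW]
  ring

theorem dbarC_reflW (hw : DifferentiableAt ℝ w (circleReflection z)) (hz : z ≠ 0)
    (hwz : w (circleReflection z) ≠ 0) :
    dbarC (reflW w) z =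
      conj (dbarC w (circleReflection z)) * circleReflection z ^ 2 * reflW w z ^ 2 := by
  rw [dbarC_eq_wirtingerZbar, (hasFDerivAt_reflW hw.hasFDerivAt hz hwz).fderiv,
    dbarC_eq_wirtingerZbar]
  simp [reflW, circleReflection]
  ring

end reflW

theorem dbarC_reflW_eq {q Q w : ℂ → ℂ} {z : ℂ}
    (hw : DifferentiableAt ℝ w (circleReflection z)) (hz : z ≠ 0) (hwz : w (circleReflection z) ≠ 0)
    (heq : dbarC w (circleReflection z) =
      q (circleReflection z) * dzC w (circleReflection z) + Q (circleReflection z)) :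
    dbarC (reflW w) z = reflq q z * dzC (reflW w) z + reflQ Q w z := by
  rw [dbarC_reflW hw hz hwz, dzC_reflW hw hz hwz, heq, reflq, reflQ]
  field_simp
  simp only [map_add, map_mul]
  ring

theorem norm_reflq (q : ℂ → ℂ) {z : ℂ} (hz : z ≠ 0) :
    ‖reflq q z‖ = ‖q (circleReflection z)‖ := by
  simp [reflq, norm_circleReflection, hz]

theorem norm_reflQ_le {Q w : ℂ → ℂ} {z : ℂ} {ε Q₀ : ℝ} (hε : 0 < ε) (hz : 1 ≤ ‖z‖)
    (hQ : ‖Q (circleReflection z)‖ ≤ Q₀) (hw : ε ≤ ‖w (circleReflection z)‖) :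
    ‖reflQ Q w z‖ ≤ Q₀ / ε ^ 2 := by
  have hσ : ‖circleReflection z‖ ^ 2 ≤ 1 :=
    pow_le_one₀ (norm_nonneg _) (norm_circleReflection z ▸ inv_le_one_of_one_le₀ hz)
  have hQ₀ : 0 ≤ Q₀ := (norm_nonneg _).trans hQ
  calc ‖reflQ Q w z‖
      = ‖Q (circleReflection z)‖ * ‖circleReflection z‖ ^ 2 / ‖w (circleReflection z)‖ ^ 2 := by
        simp [reflQ, reflW, div_eq_mul_inv]
    _ ≤ Q₀ * 1 / ε ^ 2 := by gcongr
    _ = Q₀ / ε ^ 2 := by rw [mul_one]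

theorem reflW_eq_self {w : ℂ → ℂ} {z : ℂ} (hz : ‖z‖ = 1) (hwz : ‖w z‖ = 1) :
    reflW w z = w z := by
  rw [reflW, circleReflection_eq_self hz, ← inv_eq_conj hwz, inv_inv]

theorem continuousOn_reflW {δ : ℝ} {w : ℂ → ℂ} (hw : ContinuousOn w (annulus δ))
    (hw0 : ∀ z ∈ annulus δ, w z ≠ 0) : ContinuousOn (reflW w) (annulusStar δ) := by
  have hσ : ContinuousOn circleReflection (annulusStar δ) := fun z hz =>
    (contDiffAt_circleReflection (n := 0)
      (ne_zero_of_mem_annulusStar hz)).continuousAt.continuousWithinAt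
  have hmaps := mapsTo_circleReflection_annulusStar δ
  exact (continuous_conj.comp_continuousOn (hw.comp hσ hmaps)).inv₀ fun z hz => by
    simpa using hw0 _ (hmaps hz)

theorem isClosed_annulus (δ : ℝ) : IsClosed (annulus δ) :=
  isClosed_Icc.preimage continuous_norm

theorem isClosed_annulusStar (δ : ℝ) : IsClosed (annulusStar δ) :=
  isClosed_Icc.preimage continuous_norm

theorem continuousOn_glue_annulus {X : Type*} [TopologicalSpace X] {δ : ℝ} {f g : ℂ → X}
    (hf : ContinuousOn f (annulus δ)) (hg : ContinuousOn g (annulusStar δ))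
    (hfg : ∀ z : ℂ, ‖z‖ = 1 → g z = f z) :
    ContinuousOn (fun z => if ‖z‖ ≤ 1 then f z else g z) (annulus δ ∪ annulusStar δ) := by
  refine ContinuousOn.union_of_isClosed ?_ ?_ (isClosed_annulus δ) (isClosed_annulusStar δ)
  · exact hf.congr fun z hz => if_pos hz.2
  · refine hg.congr fun z hz => ?_
    split_ifs with h
    · exact (hfg z (le_antisymm h hz.1)).symm
    · rfl

theorem beltrami_reflection_general (δ ε q₀ Q₀ : ℝ)
    (hε : 0 < ε)
    (q Q w : ℂ → ℂ)
    (hqb : ∀ z ∈ annulus δ, ‖q z‖ ≤ q₀)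
    (hQb : ∀ z ∈ annulus δ, ‖Q z‖ ≤ Q₀)
    (hw : ContDiffOn ℝ 1 w (annulus δ))
    (heq : ∀ z ∈ annulus δ,
      dbarOn w (annulus δ) z = q z * dzOn w (annulus δ) z + Q z)
    (hlow : ∀ z ∈ annulus δ, ε ≤ ‖w z‖)
    (hcirc : ∀ z : ℂ, ‖z‖ = 1 → ‖w z‖ = 1) :
    ContDiffOn ℝ 1 (reflW w) (interior (annulusStar δ)) ∧
    (∀ z ∈ interior (annulusStar δ),
      dbarC (reflW w) z = reflq q z * dzC (reflW w) z + reflQ Q w z) ∧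
    (∀ z ∈ annulusStar δ, ‖reflq q z‖ ≤ q₀) ∧
    (∀ z ∈ annulusStar δ, ‖reflQ Q w z‖ ≤ Q₀ / ε ^ 2) ∧
    (∀ z : ℂ, ‖z‖ = 1 → reflW w z = w z) ∧
    ContinuousOn (fun z => if ‖z‖ ≤ 1 then w z else reflW w z)
      (annulus δ ∪ annulusStar δ) := by
  have hw0 : ∀ z ∈ annulus δ, w z ≠ 0 := fun z hz => norm_pos_iff.1 (hε.trans_le (hlow z hz))
  have hσ := mapsTo_circleReflection_annulusStar δ
  have hint : ∀ z ∈ interior (annulusStar δ),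
      ContDiffAt ℝ 1 w (circleReflection z) ∧ z ≠ 0 ∧ w (circleReflection z) ≠ 0 :=
    fun z hz => ⟨hw.contDiffAt (annulus_mem_nhds_circleReflection hz),
      ne_zero_of_mem_annulusStar (interior_subset hz), hw0 _ (hσ (interior_subset hz))⟩
  refine ⟨fun z hz => ?_, fun z hz => ?_,
    fun z hz => norm_reflq q (ne_zero_of_mem_annulusStar hz) ▸ hqb _ (hσ hz),
    fun z hz => norm_reflQ_le hε hz.1 (hQb _ (hσ hz)) (hlow _ (hσ hz)),
    fun z hz => reflW_eq_self hz (hcirc z hz),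
    continuousOn_glue_annulus hw.continuousOn (continuousOn_reflW hw.continuousOn hw0)
      fun z hz => reflW_eq_self hz (hcirc z hz)⟩
  · obtain ⟨hwz, hz0, hwσ⟩ := hint z hz
    exact (contDiffAt_reflW hwz hz0 hwσ).contDiffWithinAt
  · obtain ⟨hwz, hz0, hwσ⟩ := hint z hz
    have hnhds := annulus_mem_nhds_circleReflection hz
    refine dbarC_reflW_eq (hwz.differentiableAt one_ne_zero) hz0 hwσ ?_
    simpa only [dbarOn_of_mem_nhds hnhds, dzOn_of_mem_nhds hnhds]
      using heq _ (hσ (interior_subset hz))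

/-- **Reflection principle for the Beltrami-type equation**: the reflection
`w̃(z) = 1/conj(w(1/conj z))` of a solution of `w_z̄ = q·w_z + Q` on the annulus `𝒜_δ` with
`|w| = 1` on the unit circle is `C¹` in the interior of `𝒜*_δ` and solves there the
reflected equation `w̃_z̄ = q̃·w̃_z + Q̃` with `|q̃| ≤ q₀`, `|Q̃| ≤ Q₀/ε²`; it agrees with `w`
on the unit circle, so `w` and `w̃` glue to a continuous function on `𝒜_δ ∪ 𝒜*_δ`. -/
theorem beltrami_reflection (δ ε q₀ Q₀ : ℝ)
    (hδ : 0 < δ) (hδ1 : δ < 1) (hε : 0 < ε)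
    (q Q w : ℂ → ℂ)
    (hq : ContinuousOn q (annulus δ))
    (hQ : ContinuousOn Q (annulus δ))
    (hqb : ∀ z ∈ annulus δ, ‖q z‖ ≤ q₀)
    (hQb : ∀ z ∈ annulus δ, ‖Q z‖ ≤ Q₀)
    (hw : ContDiffOn ℝ 1 w (annulus δ))
    (heq : ∀ z ∈ annulus δ,
      dbarOn w (annulus δ) z = q z * dzOn w (annulus δ) z + Q z)
    (hlow : ∀ z ∈ annulus δ, ε ≤ ‖w z‖)
    (hcirc : ∀ z : ℂ, ‖z‖ = 1 → ‖w z‖ = 1) :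
    ContDiffOn ℝ 1 (reflW w) (interior (annulusStar δ)) ∧
    (∀ z ∈ interior (annulusStar δ),
      dbarC (reflW w) z = reflq q z * dzC (reflW w) z + reflQ Q w z) ∧
    (∀ z ∈ annulusStar δ, ‖reflq q z‖ ≤ q₀) ∧
    (∀ z ∈ annulusStar δ, ‖reflQ Q w z‖ ≤ Q₀ / ε ^ 2) ∧
    (∀ z : ℂ, ‖z‖ = 1 → reflW w z = w z) ∧
    ContinuousOn (fun z => if ‖z‖ ≤ 1 then w z else reflW w z)
      (annulus δ ∪ annulusStar δ) :=
  beltrami_reflection_general δ ε q₀ Q₀ hε q Q w hqb hQb hw heq hlow hcirc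
end
end

section
/- Let J be an ℝ-linear endomorphism of ℂ² with J ∘ J = −Id such that J_st + J is invertible, where J_st denotes multiplication by i, and let A ∈ M₂(ℂ) be the complex matrix of J, i.e. the unique complex 2×2 matrix with A·V = (J_st + J)^{-1}((J_st − J)(conj V)) for all V ∈ ℂ² (conj denoting componentwise complex conjugation). Then J is tamed by the standard symplectic form, i.e. ω_st(V, JV) > 0 for every nonzero V ∈ ℂ², if and only if the operator norm of A is strictly less than 1. -/
/-!
Every `V` is `W + A·conj W` for exactly one `W`, because `(J_st + J)(W + A·conj W) = 2i·W` and
`J_st + J` is invertible. On such vectors the defining relation of `A` says that `J` acts as `i` on `W`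
and as `-i` on `A·conj W`. Hence `ω_st(V, JV) = |W|² - |A·conj W|²`, so `J` is tamed iff
`|A x| < |x|` for all `x ≠ 0`; in finite dimension this is `‖A‖ < 1`, the operator norm being
attained on the compact unit sphere.
-/

open Complex

noncomputable section

/-- The standard symplectic form `ω_st` on `ℂ² ≅ ℝ⁴`. -/
def omegaSt (v w : ℂ × ℂ) : ℝ :=
  ((starRingEnd ℂ) v.1 * w.1).im + ((starRingEnd ℂ) v.2 * w.2).im

/-- The standard complex structure on `ℂ²` (multiplication by `i`), as an ℝ-linear map. -/
def Jst : (ℂ × ℂ) →ₗ[ℝ] (ℂ × ℂ) :=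
  (LinearMap.lsmul ℂ (ℂ × ℂ) Complex.I).restrictScalars ℝ

/-- Componentwise complex conjugation on `ℂ²`. -/
def conj2 (v : ℂ × ℂ) : ℂ × ℂ := ((starRingEnd ℂ) v.1, (starRingEnd ℂ) v.2)

/-- Action of a `2×2` complex matrix on `ℂ²` (written as `ℂ × ℂ`). -/
def matVec (A : Matrix (Fin 2) (Fin 2) ℂ) (v : ℂ × ℂ) : ℂ × ℂ :=
  (A 0 0 * v.1 + A 0 1 * v.2, A 1 0 * v.1 + A 1 1 * v.2)

/-- The operator norm of a matrix, with respect to the Euclidean (L²) norm on `ℂ²`. -/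
def matrixOpNorm (A : Matrix (Fin 2) (Fin 2) ℂ) : ℝ :=
  ‖(Matrix.toEuclideanCLM (𝕜 := ℂ) A :
      EuclideanSpace ℂ (Fin 2) →L[ℂ] EuclideanSpace ℂ (Fin 2))‖

section OpNorm

variable {𝕜 𝕜₂ E F : Type*} [RCLike 𝕜] [NontriviallyNormedField 𝕜₂]
  [NormedAddCommGroup E] [NormedSpace 𝕜 E] [ProperSpace E] [NormedAddCommGroup F]
  [NormedSpace 𝕜₂ F] {σ₁₂ : 𝕜 →+* 𝕜₂} [RingHomIsometric σ₁₂]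

theorem ContinuousLinearMap.exists_norm_eq_one_and_norm_apply_eq_opNorm [Nontrivial E]
    (f : E →SL[σ₁₂] F) : ∃ x : E, ‖x‖ = 1 ∧ ‖f x‖ = ‖f‖ := by
  have hmem := ((isCompact_sphere (0 : E) 1).image f.continuous.norm).sSup_mem
    ((Set.nonempty_coe_sort.mp (NormedSpace.sphere_nonempty_rclike 𝕜 zero_le_one)).image _)
  obtain ⟨x, hx, hfx⟩ := hmem
  exact ⟨x, mem_sphere_zero_iff_norm.mp hx, hfx.trans f.sSup_sphere_eq_norm⟩

theorem ContinuousLinearMap.opNorm_lt_iff_forall_norm_apply_lt (f : E →SL[σ₁₂] F) {c : ℝ}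
    (hc : 0 < c) : ‖f‖ < c ↔ ∀ x : E, x ≠ 0 → ‖f x‖ < c * ‖x‖ := by
  refine ⟨fun h x hx => (f.le_opNorm x).trans_lt ?_, fun h => ?_⟩
  · exact mul_lt_mul_of_pos_right h (norm_pos_iff.mpr hx)
  cases subsingleton_or_nontrivial E
  · rwa [f.opNorm_subsingleton]
  obtain ⟨x, hx, hfx⟩ := f.exists_norm_eq_one_and_norm_apply_eq_opNorm
  simpa [hx, hfx] using h x (norm_ne_zero_iff.mp (hx.trans_ne one_ne_zero))

end OpNorm

def prodToEuclidean : (ℂ × ℂ) ≃ₗ[ℂ] EuclideanSpace ℂ (Fin 2) :=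
  (LinearEquiv.finTwoArrow ℂ ℂ).symm.trans (EuclideanSpace.equiv (Fin 2) ℂ).toLinearEquiv.symm

lemma toEuclideanCLM_prodToEuclidean (A : Matrix (Fin 2) (Fin 2) ℂ) (v : ℂ × ℂ) :
    Matrix.toEuclideanCLM (𝕜 := ℂ) A (prodToEuclidean v) = prodToEuclidean (matVec A v) := by
  ext i
  fin_cases i <;> simp [prodToEuclidean, Matrix.toEuclideanCLM_toLp, matVec]

lemma norm_prodToEuclidean_sq (v : ℂ × ℂ) :
    ‖prodToEuclidean v‖ ^ 2 = normSq v.1 + normSq v.2 := by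
  simp [EuclideanSpace.norm_sq_eq, Fin.sum_univ_two, prodToEuclidean, Complex.sq_norm]

lemma norm_prodToEuclidean_conj2 (v : ℂ × ℂ) :
    ‖prodToEuclidean (conj2 v)‖ = ‖prodToEuclidean v‖ := by
  rw [← sq_eq_sq₀ (norm_nonneg _) (norm_nonneg _), norm_prodToEuclidean_sq, norm_prodToEuclidean_sq]
  simp [conj2]

lemma omegaSt_add_I_smul_sub_I_smul (u w : ℂ × ℂ) :
    omegaSt (u + w) (I • u - I • w) = ‖prodToEuclidean u‖ ^ 2 - ‖prodToEuclidean w‖ ^ 2 := by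
  rw [norm_prodToEuclidean_sq, norm_prodToEuclidean_sq]
  simp only [omegaSt, normSq_apply, Prod.fst_add, Prod.snd_add, Prod.fst_sub, Prod.snd_sub,
    Prod.smul_fst, Prod.smul_snd, smul_eq_mul, mul_im, map_add, conj_re, conj_im, add_re, add_im,
    sub_re, sub_im, mul_re, I_re, I_im]
  ring

lemma conj2_involutive : Function.Involutive conj2 := fun v => by simp [conj2]

lemma conj2_zero : conj2 0 = 0 := by simp [conj2, Prod.ext_iff]

lemma Jst_apply (v : ℂ × ℂ) : Jst v = I • v := rfl

def IsComplexMatrix (J : (ℂ × ℂ) →ₗ[ℝ] (ℂ × ℂ)) (A : Matrix (Fin 2) (Fin 2) ℂ) : Prop :=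
  ∀ V : ℂ × ℂ, (Jst + J) (matVec A V) = (Jst - J) (conj2 V)

section ComplexMatrix

variable {J : (ℂ × ℂ) →ₗ[ℝ] (ℂ × ℂ)} {A : Matrix (Fin 2) (Fin 2) ℂ}

lemma J_apply_add_matVec_conj2 (hA : IsComplexMatrix J A) (W : ℂ × ℂ) :
    J (W + matVec A (conj2 W)) = I • W - I • matVec A (conj2 W) := by
  have h := hA (conj2 W)
  rw [conj2_involutive W, LinearMap.add_apply, LinearMap.sub_apply, Jst_apply, Jst_apply] at h
  rw [map_add]
  linear_combination (norm := module) h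

lemma Jst_add_J_apply_add_matVec_conj2 (hA : IsComplexMatrix J A) (W : ℂ × ℂ) :
    (Jst + J) (W + matVec A (conj2 W)) = (2 * I) • W := by
  rw [LinearMap.add_apply, J_apply_add_matVec_conj2 hA, Jst_apply]
  module

lemma bijective_add_matVec_conj2 (hA : IsComplexMatrix J A)
    (hinv : Function.Bijective (Jst + J)) :
    Function.Bijective fun W => W + matVec A (conj2 W) := by
  rw [← hinv.of_comp_iff']
  convert MulAction.bijective₀ (α := ℂ × ℂ) (mul_ne_zero two_ne_zero I_ne_zero) using 1
  exact funext (Jst_add_J_apply_add_matVec_conj2 hA)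

lemma tamed_iff_forall_norm_matVec_lt (hA : IsComplexMatrix J A)
    (hinv : Function.Bijective (Jst + J)) :
    (∀ V : ℂ × ℂ, V ≠ 0 → 0 < omegaSt V (J V)) ↔
      ∀ x : ℂ × ℂ, x ≠ 0 → ‖prodToEuclidean (matVec A x)‖ < ‖prodToEuclidean x‖ := by
  have hΦ := bijective_add_matVec_conj2 hA hinv
  rw [hΦ.surjective.forall, conj2_involutive.surjective.forall]
  refine forall_congr' fun x => ?_
  rw [hΦ.injective.ne_iff' (y := 0) (by simp [conj2_zero, matVec]),
    conj2_involutive.injective.ne_iff' conj2_zero, J_apply_add_matVec_conj2 hA, conj2_involutive x,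
    omegaSt_add_I_smul_sub_I_smul, sub_pos, norm_prodToEuclidean_conj2,
    sq_lt_sq₀ (norm_nonneg _) (norm_nonneg _)]

end ComplexMatrix

theorem tamed_iff_opNorm_lt_one_general (J : (ℂ × ℂ) →ₗ[ℝ] (ℂ × ℂ))
    (hinv : Function.Bijective (Jst + J))
    (A : Matrix (Fin 2) (Fin 2) ℂ)
    (hA : ∀ V : ℂ × ℂ, (Jst + J) (matVec A V) = (Jst - J) (conj2 V)) :
    (∀ V : ℂ × ℂ, V ≠ 0 → 0 < omegaSt V (J V)) ↔ matrixOpNorm A < 1 := by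
  rw [tamed_iff_forall_norm_matVec_lt hA hinv, matrixOpNorm,
    ContinuousLinearMap.opNorm_lt_iff_forall_norm_apply_lt _ one_pos,
    prodToEuclidean.surjective.forall]
  simp only [one_mul, toEuclideanCLM_prodToEuclidean,
    map_ne_zero_iff _ prodToEuclidean.injective]

/-- A linear complex structure `J` on `ℂ²` with `J_st + J` invertible is tamed by the
standard symplectic form, i.e. `ω_st(V, JV) > 0` for `V ≠ 0`, if and only if the operator
norm of its complex matrix `A` (defined by `(J_st + J)(A·V) = (J_st − J)(conj V)`) is
strictly less than `1`. -/
theorem tamed_iff_opNorm_lt_one (J : (ℂ × ℂ) →ₗ[ℝ] (ℂ × ℂ))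
    (hJJ : J.comp J = -LinearMap.id)
    (hinv : Function.Bijective (Jst + J))
    (A : Matrix (Fin 2) (Fin 2) ℂ)
    (hA : ∀ V : ℂ × ℂ, (Jst + J) (matVec A V) = (Jst - J) (conj2 V)) :
    (∀ V : ℂ × ℂ, V ≠ 0 → 0 < omegaSt V (J V)) ↔ matrixOpNorm A < 1 :=
  tamed_iff_opNorm_lt_one_general J hinv A hA
end
end
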